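/- Let T be a tournament on n ≥ 4 vertices, and let c4(T) = C4(T)/C(n,4) and t4(T) = T4(T)/C(n,4), where C4(T) is the number of 4-element vertex subsets whose induced subtournament contains a directed 4-cycle and T4(T) is the number of 4-element vertex subsets spanning a transitive subtournament. Then c4(T) ≤ 1 − t4(T) and c4(T) ≤ t4(T) + 3/(n−2). -/

import Mathlib

open Finset

/-- A tournament on `Fin n`: an orientation of the complete graph, i.e. no loops and
for all distinct `x, y` exactly one of `r x y`, `r y x` holds. -/
def IsTournament {n : ℕ} (r : Fin n → Fin n → Prop) : Prop :=
  (∀ x, ¬ r x x) ∧ ∀ x y : Fin n, x ≠ y → ((r x y ∧ ¬ r y x) ∨ (r y x ∧ ¬ r x y))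

/-- `s` spans a cyclic triangle: `s = {x,y,z}` with `x→y→z→x`. -/
def IsCyclicTriple {n : ℕ} (r : Fin n → Fin n → Prop) (s : Finset (Fin n)) : Prop :=
  ∃ x y z : Fin n, x ≠ y ∧ y ≠ z ∧ x ≠ z ∧ s = {x, y, z} ∧ r x y ∧ r y z ∧ r z x

/-- `s` spans a transitive triple. -/
def IsTransTriple {n : ℕ} (r : Fin n → Fin n → Prop) (s : Finset (Fin n)) : Prop :=
  ∃ x y z : Fin n, x ≠ y ∧ y ≠ z ∧ x ≠ z ∧ s = {x, y, z} ∧ r x y ∧ r y z ∧ r x z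

/-- `s` contains a directed 4-cycle through all of its (four) elements. -/
def HasCycle4 {n : ℕ} (r : Fin n → Fin n → Prop) (s : Finset (Fin n)) : Prop :=
  ∃ a b c d : Fin n, a ≠ b ∧ a ≠ c ∧ a ≠ d ∧ b ≠ c ∧ b ≠ d ∧ c ≠ d ∧
    s = {a, b, c, d} ∧ r a b ∧ r b c ∧ r c d ∧ r d a

/-- `s` spans a transitive 4-vertex subtournament. -/
def IsTrans4 {n : ℕ} (r : Fin n → Fin n → Prop) (s : Finset (Fin n)) : Prop :=
  ∃ a b c d : Fin n, a ≠ b ∧ a ≠ c ∧ a ≠ d ∧ b ≠ c ∧ b ≠ d ∧ c ≠ d ∧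
    s = {a, b, c, d} ∧ r a b ∧ r a c ∧ r a d ∧ r b c ∧ r b d ∧ r c d

open Classical in
/-- `C3(T)`: number of 3-element vertex subsets spanning a cyclic triangle. -/
noncomputable def cyc3Count {n : ℕ} (r : Fin n → Fin n → Prop) : ℕ :=
  ((univ.powersetCard 3).filter (fun s => IsCyclicTriple r s)).card

open Classical in
/-- `T3(T)`: number of 3-element vertex subsets spanning a transitive triple. -/
noncomputable def trans3Count {n : ℕ} (r : Fin n → Fin n → Prop) : ℕ :=
  ((univ.powersetCard 3).filter (fun s => IsTransTriple r s)).card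

open Classical in
/-- `C4(T)`: number of 4-element vertex subsets containing a directed 4-cycle. -/
noncomputable def cyc4Count {n : ℕ} (r : Fin n → Fin n → Prop) : ℕ :=
  ((univ.powersetCard 4).filter (fun s => HasCycle4 r s)).card

open Classical in
/-- `T4(T)`: number of 4-element vertex subsets spanning a transitive subtournament. -/
noncomputable def trans4Count {n : ℕ} (r : Fin n → Fin n → Prop) : ℕ :=
  ((univ.powersetCard 4).filter (fun s => IsTrans4 r s)).card

/-!
A transitive 4-set has a vertex beating the other three, while in a 4-set carrying a directed
4-cycle every vertex is beaten inside the set; hence no 4-set is of both kinds.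

For the second inequality count cyclic triples inside 4-sets. A 4-set with a 4-cycle contains a
cyclic triple through each of its two diagonals, hence at least two, and a 4-set without cyclic
triples is transitive. Each cyclic triple lies in `n - 3` of the 4-sets, so
`C4 + C(n,4) ≤ T4 + (n - 3) C3`. Finally `24 C3 ≤ (n + 1) n (n - 1)`: a triple with a vertex
beating the other two is not cyclic, so `C3 + ∑ᵥ C(d⁺(v), 2) ≤ C(n,3)`; and since
`∑ᵥ d⁺(v) = C(n,2)`, the sum is bounded below via `∑ᵥ (d⁺(v) - (n - 1)/2)² ≥ 0`.
-/

open scoped Classical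

variable {n : ℕ} {r : Fin n → Fin n → Prop} {s t : Finset (Fin n)} {a b c d v w : Fin n}

namespace IsTournament

theorem irrefl (hT : IsTournament r) (x : Fin n) : ¬ r x x := hT.1 x

theorem ne (hT : IsTournament r) (h : r a b) : a ≠ b := by
  rintro rfl
  exact hT.1 a h

theorem asymm (hT : IsTournament r) (h : r a b) : ¬ r b a := by
  rcases hT.2 a b (hT.ne h) with ⟨-, h'⟩ | ⟨-, h'⟩
  · exact h'
  · exact absurd h h'

theorem total (hT : IsTournament r) (hab : a ≠ b) : r a b ∨ r b a :=
  (hT.2 a b hab).imp And.left And.left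

theorem of_not (hT : IsTournament r) (hab : a ≠ b) (h : ¬ r a b) : r b a :=
  (hT.total hab).resolve_left h

end IsTournament

def IsSource (r : Fin n → Fin n → Prop) (s : Finset (Fin n)) (v : Fin n) : Prop :=
  v ∈ s ∧ ∀ w ∈ s, w ≠ v → r v w

theorem IsSource.eq (hT : IsTournament r) (hv : IsSource r s v) (hw : IsSource r s w) :
    v = w := by
  by_contra h
  exact hT.asymm (hv.2 w hw.1 (Ne.symm h)) (hw.2 v hv.1 h)

theorem isSource_insert (ht : ∀ w ∈ t, r v w) : IsSource r (insert v t) v := by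
  refine ⟨mem_insert_self v t, fun w hw hwv => ht w ?_⟩
  exact (mem_insert.1 hw).resolve_left hwv

theorem IsTournament.not_isSource (hT : IsTournament r) (h : ∀ v ∈ s, ∃ w ∈ s, r w v) :
    ¬ IsSource r s v := by
  rintro ⟨hv, hsrc⟩
  obtain ⟨w, hw, hwv⟩ := h v hv
  exact hT.asymm hwv (hsrc w hw (hT.ne hwv))

theorem IsCyclicTriple.card_eq (h : IsCyclicTriple r s) : #s = 3 := by
  obtain ⟨x, y, z, hxy, hyz, hxz, rfl, -⟩ := h
  exact card_eq_three.2 ⟨x, y, z, hxy, hxz, hyz, rfl⟩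

theorem IsCyclicTriple.exists_rel (h : IsCyclicTriple r s) : ∀ v ∈ s, ∃ w ∈ s, r w v := by
  obtain ⟨x, y, z, -, -, -, rfl, hxy, hyz, hzx⟩ := h
  simp only [mem_insert, mem_singleton, forall_eq_or_imp, forall_eq, exists_eq_or_imp]
  tauto

theorem HasCycle4.exists_rel (h : HasCycle4 r s) : ∀ v ∈ s, ∃ w ∈ s, r w v := by
  obtain ⟨a, b, c, d, -, -, -, -, -, -, rfl, hab, hbc, hcd, hda⟩ := h
  simp only [mem_insert, mem_singleton, forall_eq_or_imp, forall_eq, exists_eq_or_imp]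
  tauto

theorem IsTrans4.exists_isSource (h : IsTrans4 r s) : ∃ v, IsSource r s v := by
  obtain ⟨a, b, c, d, -, -, -, -, -, -, rfl, hab, hac, had, -⟩ := h
  refine ⟨a, isSource_insert ?_⟩
  simp only [mem_insert, mem_singleton, forall_eq_or_imp, forall_eq]
  exact ⟨hab, hac, had⟩

theorem IsTrans4.not_hasCycle4 (hT : IsTournament r) (h : IsTrans4 r s) : ¬ HasCycle4 r s :=
  fun hc => h.exists_isSource.elim fun _ hv => hT.not_isSource hc.exists_rel hv

theorem isTrans4_of_rel (hT : IsTournament r) (hab : r a b) (hac : r a c) (had : r a d)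
    (hbc : r b c) (hbd : r b d) (hcd : r c d) : IsTrans4 r {a, b, c, d} :=
  ⟨a, b, c, d, hT.ne hab, hT.ne hac, hT.ne had, hT.ne hbc, hT.ne hbd, hT.ne hcd, rfl,
    hab, hac, had, hbc, hbd, hcd⟩

/-- A vertex of maximal out-degree inside `s` is a source: a vertex beating it would, for lack of
cyclic triples, also beat all of its out-neighbours. -/
theorem IsTournament.exists_isSource (hT : IsTournament r) (hs : s.Nonempty)
    (hno : ∀ t ⊆ s, ¬ IsCyclicTriple r t) : ∃ v, IsSource r s v := by
  obtain ⟨v, hv, hmax⟩ := s.exists_max_image (fun v => #{u ∈ s | r v u}) hs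
  refine ⟨v, hv, fun w hw hwv => by_contra fun hvw => ?_⟩
  have hwv' : r w v := hT.of_not hwv.symm hvw
  have hsub : insert v {u ∈ s | r v u} ⊆ {u ∈ s | r w u} := by
    intro u hu
    rcases mem_insert.1 hu with rfl | hu
    · exact mem_filter.2 ⟨hv, hwv'⟩
    obtain ⟨hu, hvu⟩ := mem_filter.1 hu
    have hwu : w ≠ u := by rintro rfl; exact hvw hvu
    refine mem_filter.2 ⟨hu, by_contra fun hnwu => hno {w, v, u} ?_ ?_⟩
    · simp only [insert_subset_iff, singleton_subset_iff]
      exact ⟨hw, hv, hu⟩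
    · exact ⟨w, v, u, hwv, hT.ne hvu, hwu, rfl, hwv', hvu, hT.of_not hwu hnwu⟩
  have hcard := card_le_card hsub
  rw [card_insert_of_notMem (by simp [hT.irrefl])] at hcard
  exact absurd (hmax w hw) (by omega)

theorem IsTournament.isTrans4_of_forall_not_isCyclicTriple (hT : IsTournament r) (hs : #s = 4)
    (hno : ∀ t ⊆ s, ¬ IsCyclicTriple r t) : IsTrans4 r s := by
  obtain ⟨a, ha, hsa⟩ := hT.exists_isSource (card_pos.1 (by omega)) hno
  have hs' : #(s.erase a) = 3 := by rw [card_erase_of_mem ha, hs]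
  obtain ⟨b, hb, hsb⟩ := hT.exists_isSource (card_pos.1 (by omega))
    fun t ht => hno t (ht.trans (erase_subset a s))
  have hs'' : #((s.erase a).erase b) = 2 := by rw [card_erase_of_mem hb, hs']
  obtain ⟨c, d, hcd, hcd'⟩ := card_eq_two.1 hs''
  wlog hrcd : r c d generalizing c d
  · exact this d c hcd.symm (by rw [hcd', pair_comm]) (hT.of_not hcd hrcd)
  have hc : c ∈ (s.erase a).erase b := by simp [hcd']
  have hd : d ∈ (s.erase a).erase b := by simp [hcd']
  have hseq : s = {a, b, c, d} := by rw [← insert_erase ha, ← insert_erase hb, hcd']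
  rw [hseq]
  exact isTrans4_of_rel hT (hsa b (mem_of_mem_erase hb) (ne_of_mem_erase hb))
    (hsa c (mem_of_mem_erase (mem_of_mem_erase hc)) (ne_of_mem_erase (mem_of_mem_erase hc)))
    (hsa d (mem_of_mem_erase (mem_of_mem_erase hd)) (ne_of_mem_erase (mem_of_mem_erase hd)))
    (hsb c (mem_of_mem_erase hc) (ne_of_mem_erase hc))
    (hsb d (mem_of_mem_erase hd) (ne_of_mem_erase hd)) hrcd

theorem IsTournament.exists_isCyclicTriple_of_cycle4 (hT : IsTournament r) (ha : a ∈ s)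
    (hb : b ∈ s) (hc : c ∈ s) (hd : d ∈ s) (hab : r a b) (hbc : r b c) (hcd : r c d)
    (hda : r d a) (hac : a ≠ c) : ∃ t ⊆ s, IsCyclicTriple r t ∧ a ∈ t ∧ c ∈ t := by
  rcases hT.total hac with hac | hca
  · refine ⟨{c, d, a}, by simp [insert_subset_iff, *], ?_, by simp, by simp⟩
    exact ⟨c, d, a, hT.ne hcd, hT.ne hda, (hT.ne hac).symm, rfl, hcd, hda, hac⟩
  · refine ⟨{a, b, c}, by simp [insert_subset_iff, *], ?_, by simp, by simp⟩
    exact ⟨a, b, c, hT.ne hab, hT.ne hbc, hac, rfl, hab, hbc, hca⟩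

noncomputable def cyclicTriples (r : Fin n → Fin n → Prop) (s : Finset (Fin n)) :
    Finset (Finset (Fin n)) :=
  (s.powersetCard 3).filter (fun t => IsCyclicTriple r t)

theorem mem_cyclicTriples : t ∈ cyclicTriples r s ↔ t ⊆ s ∧ IsCyclicTriple r t := by
  simp only [cyclicTriples, mem_filter, mem_powersetCard]
  exact ⟨fun h => ⟨h.1.1, h.2⟩, fun h => ⟨⟨h.1, h.2.card_eq⟩, h.2⟩⟩

theorem IsTournament.two_le_card_cyclicTriples (hT : IsTournament r) (h : HasCycle4 r s) :
    2 ≤ #(cyclicTriples r s) := by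
  obtain ⟨a, b, c, d, hab, hac, had, hbc, hbd, hcd, rfl, rab, rbc, rcd, rda⟩ := h
  obtain ⟨t₁, ht₁, hcyc₁, hat₁, hct₁⟩ :=
    hT.exists_isCyclicTriple_of_cycle4 (s := {a, b, c, d}) (by simp) (by simp) (by simp)
      (by simp) rab rbc rcd rda hac
  obtain ⟨t₂, ht₂, hcyc₂, hbt₂, hdt₂⟩ :=
    hT.exists_isCyclicTriple_of_cycle4 (s := {a, b, c, d}) (by simp) (by simp) (by simp)
      (by simp) rbc rcd rda rab hbd
  refine one_lt_card.2 ⟨t₁, mem_cyclicTriples.2 ⟨ht₁, hcyc₁⟩, t₂,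
    mem_cyclicTriples.2 ⟨ht₂, hcyc₂⟩, fun heq => ?_⟩
  subst heq
  have hsub : ({a, b, c, d} : Finset (Fin n)) ⊆ t₁ := by
    simp [insert_subset_iff, hat₁, hbt₂, hct₁, hdt₂]
  have := card_le_card hsub
  rw [hcyc₁.card_eq, card_eq_four.2 ⟨a, b, c, d, hab, hac, had, hbc, hbd, hcd, rfl⟩] at this
  omega

theorem IsTournament.one_le_card_cyclicTriples (hT : IsTournament r) (hs : #s = 4)
    (h : ¬ IsTrans4 r s) : 1 ≤ #(cyclicTriples r s) := by
  by_contra! h0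
  refine h (hT.isTrans4_of_forall_not_isCyclicTriple hs fun t ht hcyc => ?_)
  have := card_pos.2 ⟨t, mem_cyclicTriples.2 ⟨ht, hcyc⟩⟩
  omega

theorem IsTournament.ite_hasCycle4_add_one_le (hT : IsTournament r) (hs : #s = 4) :
    (if HasCycle4 r s then 1 else 0) + 1 ≤
      (if IsTrans4 r s then 1 else 0) + #(cyclicTriples r s) := by
  by_cases hc : HasCycle4 r s
  · have := hT.two_le_card_cyclicTriples hc
    have ht : ¬ IsTrans4 r s := fun ht => ht.not_hasCycle4 hT hc
    simp only [hc, ht, if_true, if_false]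
    omega
  · by_cases ht : IsTrans4 r s
    · simp [hc, ht]
    · have := hT.one_le_card_cyclicTriples hs ht
      simp only [hc, ht, if_false]
      omega

theorem sum_card_cyclicTriples (r : Fin n → Fin n → Prop) :
    ∑ s ∈ univ.powersetCard 4, #(cyclicTriples r s) = cyc3Count r * (n - 3) := by
  have hfilter : ∀ s, cyclicTriples r s = (cyclicTriples r univ).filter (· ⊆ s) := by
    intro s
    ext t
    simp only [mem_filter, mem_cyclicTriples, subset_univ, true_and, and_comm]
  calc ∑ s ∈ univ.powersetCard 4, #(cyclicTriples r s)
      = ∑ s ∈ univ.powersetCard 4,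
          #((cyclicTriples r univ).bipartiteAbove (fun s t => t ⊆ s) s) := by
        refine sum_congr rfl fun s _ => ?_
        rw [bipartiteAbove, hfilter s]
    _ = ∑ t ∈ cyclicTriples r univ,
          #((univ.powersetCard 4).bipartiteBelow (fun s t => t ⊆ s) t) :=
        sum_card_bipartiteAbove_eq_sum_card_bipartiteBelow _
    _ = ∑ _t ∈ cyclicTriples r univ, (n - 3) := by
        refine sum_congr rfl fun t ht => ?_
        have ht3 := (mem_cyclicTriples.1 ht).2.card_eq
        rw [bipartiteBelow, card_filter_powersetCard_subset t univ 4 (subset_univ t) (by omega),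
          ht3, card_univ, Fintype.card_fin, Nat.choose_one_right]
    _ = cyc3Count r * (n - 3) := by rw [sum_const, smul_eq_mul]; rfl

theorem IsTournament.cyc4Count_add_choose_le (hT : IsTournament r) :
    cyc4Count r + n.choose 4 ≤ trans4Count r + cyc3Count r * (n - 3) := by
  have hsum := sum_le_sum (s := univ.powersetCard 4) fun s hs =>
    hT.ite_hasCycle4_add_one_le (mem_powersetCard.1 hs).2
  rw [sum_add_distrib, sum_add_distrib, ← card_filter, ← card_filter, sum_const, smul_eq_mul,
    mul_one, card_powersetCard, card_univ, Fintype.card_fin, sum_card_cyclicTriples] at hsum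
  exact hsum

theorem IsTournament.cyc4Count_add_trans4Count_le (hT : IsTournament r) :
    cyc4Count r + trans4Count r ≤ n.choose 4 := by
  calc cyc4Count r + trans4Count r
      = #({s ∈ (univ : Finset (Fin n)).powersetCard 4 | HasCycle4 r s} ∪
          {s ∈ (univ : Finset (Fin n)).powersetCard 4 | IsTrans4 r s}) :=
        (card_union_of_disjoint (disjoint_filter.2 fun s _ hc ht => ht.not_hasCycle4 hT hc)).symm
    _ ≤ #((univ : Finset (Fin n)).powersetCard 4) :=
        card_le_card (union_subset (filter_subset _ _) (filter_subset _ _))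
    _ = n.choose 4 := by rw [card_powersetCard, card_univ, Fintype.card_fin]

noncomputable def outdeg (r : Fin n → Fin n → Prop) (v : Fin n) : ℕ :=
  #{w | r v w}

theorem IsTournament.outdeg_add_card_filter_rel (hT : IsTournament r) (v : Fin n) :
    outdeg r v + #{w | r w v} = n - 1 := by
  have hdisj : Disjoint (α := Finset (Fin n)) {w | r v w} {w | r w v} :=
    disjoint_filter.2 fun _ _ hvw hwv => hT.asymm hvw hwv
  have hunion :
      ({w | r v w} : Finset (Fin n)) ∪ ({w | r w v} : Finset (Fin n)) = univ.erase v := by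
    ext w
    simp only [mem_union, mem_filter, mem_univ, true_and, mem_erase, and_true]
    exact ⟨fun h => h.elim (fun h => (hT.ne h).symm) hT.ne, fun h => hT.total (Ne.symm h)⟩
  rw [outdeg, ← card_union_of_disjoint hdisj, hunion, card_erase_of_mem (mem_univ v), card_univ,
    Fintype.card_fin]

theorem IsTournament.sum_outdeg (hT : IsTournament r) : ∑ v, outdeg r v = n.choose 2 := by
  have hin : ∑ v, #{w | r w v} = ∑ v, outdeg r v := by
    simp only [outdeg, card_filter]
    exact sum_comm
  have h2 : 2 * ∑ v, outdeg r v = n * (n - 1) := by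
    rw [two_mul]
    nth_rewrite 2 [← hin]
    rw [← sum_add_distrib, sum_congr rfl fun v _ => hT.outdeg_add_card_filter_rel v, sum_const,
      card_univ, Fintype.card_fin, smul_eq_mul]
  rw [Nat.choose_two_right, ← h2, Nat.mul_div_cancel_left _ two_pos]

theorem IsTournament.cyc3Count_add_sum_choose_outdeg_le (hT : IsTournament r) :
    cyc3Count r + ∑ v, (outdeg r v).choose 2 ≤ n.choose 3 := by
  have hsigma : ∑ v, (outdeg r v).choose 2 =
      #(univ.sigma fun v => ({w | r v w} : Finset (Fin n)).powersetCard 2) := by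
    simp only [card_sigma, card_powersetCard, outdeg]
  have hout : ∀ p ∈ univ.sigma fun v => ({w | r v w} : Finset (Fin n)).powersetCard 2,
      IsSource r (insert p.1 p.2) p.1 ∧ p.1 ∉ p.2 ∧ #p.2 = 2 := by
    rintro ⟨v, t⟩ hvt
    obtain ⟨hsub, ht2⟩ := mem_powersetCard.1 (mem_sigma.1 hvt).2
    have hrel : ∀ w ∈ t, r v w := fun w hw => (mem_filter.1 (hsub hw)).2
    exact ⟨isSource_insert hrel, fun hv => hT.irrefl v (hrel v hv), ht2⟩
  have hinj : ∑ v, (outdeg r v).choose 2 ≤ #{t ∈ univ.powersetCard 3 | ¬ IsCyclicTriple r t} := by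
    rw [hsigma]
    refine card_le_card_of_injOn (fun p => insert p.1 p.2) (fun p hp => ?_) fun p hp q hq heq => ?_
    · obtain ⟨hsrc, hv, ht2⟩ := hout p hp
      refine mem_filter.2 ⟨mem_powersetCard.2 ⟨subset_univ _, ?_⟩, fun hc => ?_⟩
      · rw [card_insert_of_notMem hv, ht2]
      · exact hT.not_isSource hc.exists_rel hsrc
    · obtain ⟨hsrc, hv, -⟩ := hout p hp
      obtain ⟨hsrc', hv', -⟩ := hout q hq
      have hpq : p.1 = q.1 :=
        hsrc.eq hT (by rw [show insert p.1 p.2 = insert q.1 q.2 from heq]; exact hsrc')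
      obtain ⟨v, t⟩ := p
      obtain ⟨v', t'⟩ := q
      dsimp only at hpq heq hv hv'
      subst hpq
      rw [← erase_insert hv, heq, erase_insert hv']
  have hsplit := card_filter_add_card_filter_not (s := (univ : Finset (Fin n)).powersetCard 3)
    (fun t => IsCyclicTriple r t)
  rw [card_powersetCard, card_univ, Fintype.card_fin] at hsplit
  rw [cyc3Count, ← hsplit]
  omega

theorem IsTournament.cyc3Count_le (hT : IsTournament r) :
    (24 : ℝ) * cyc3Count r ≤ (n + 1) * n * (n - 1) := by
  have hcount : (cyc3Count r : ℝ) + ∑ v, (outdeg r v : ℝ) * (outdeg r v - 1) / 2 ≤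
      n * (n - 1) * (n - 2) / 6 := by
    have := (Nat.cast_le (α := ℝ)).2 hT.cyc3Count_add_sum_choose_outdeg_le
    simpa [Nat.cast_choose_two, Nat.cast_choose_eq_descPochhammer_div, descPochhammer_succ_eval,
      Nat.factorial] using this
  have hsum : ∑ v, (outdeg r v : ℝ) = n * (n - 1) / 2 := by
    rw [← Nat.cast_choose_two, ← hT.sum_outdeg, Nat.cast_sum]
  have hvar : 0 ≤ ∑ v, ((outdeg r v : ℝ) - (n - 1) / 2) ^ 2 := sum_nonneg fun _ _ => sq_nonneg _
  simp only [sub_sq, sum_add_distrib, sum_sub_distrib, ← sum_mul, ← mul_sum, sum_const, card_univ,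
    Fintype.card_fin, nsmul_eq_mul] at hvar
  simp only [mul_sub, sum_sub_distrib, ← sum_div, mul_one, ← pow_two] at hcount
  rw [hsum] at hvar hcount
  linarith

/-- `c4(T) ≤ 1 − t4(T)` and `c4(T) ≤ t4(T) + 3/(n−2)`. -/
theorem stmt_3 {n : ℕ} (hn : 4 ≤ n) (r : Fin n → Fin n → Prop) (hT : IsTournament r) :
    (cyc4Count r : ℝ) / (n.choose 4 : ℝ) ≤ 1 - (trans4Count r : ℝ) / (n.choose 4 : ℝ) ∧
    (cyc4Count r : ℝ) / (n.choose 4 : ℝ) ≤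
      (trans4Count r : ℝ) / (n.choose 4 : ℝ) + 3 / ((n : ℝ) - 2) := by
  have hN : (0 : ℝ) < n.choose 4 := by exact_mod_cast Nat.choose_pos hn
  have hn4 : (4 : ℝ) ≤ n := by exact_mod_cast hn
  refine ⟨?_, ?_⟩
  · rw [le_sub_iff_add_le, ← add_div, div_le_one hN]
    exact_mod_cast hT.cyc4Count_add_trans4Count_le
  · have hcount : (cyc4Count r : ℝ) + n.choose 4 ≤ trans4Count r + cyc3Count r * (n - 3) := by
      have := (Nat.cast_le (α := ℝ)).2 hT.cyc4Count_add_choose_le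
      push_cast [Nat.cast_sub (by omega : 3 ≤ n)] at this
      exact this
    have hchoose : (n.choose 4 : ℝ) = n * (n - 1) * (n - 2) * (n - 3) / 24 := by
      simp [Nat.cast_choose_eq_descPochhammer_div, descPochhammer_succ_eval, Nat.factorial]
    rw [← sub_le_iff_le_add', ← sub_div, div_le_div_iff₀ hN (by linarith)]
    rw [hchoose] at hcount ⊢
    linarith [mul_le_mul_of_nonneg_right hcount (by linarith : (0 : ℝ) ≤ n - 2),
      mul_le_mul_of_nonneg_right hT.cyc3Count_le (by nlinarith : (0 : ℝ) ≤ (n - 3) * (n - 2))]
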